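/- Define m_n := (n!)^2 K_n^2 for n ≥ 1, where K_n := ∫_0^∞ (ln(1+x))^n e^{-x} dx. Then the sequence (m_n) satisfies Carleman's condition ∑_{n=1}^∞ m_n^{-1/(2n)} = ∞, but there is no constant c₀ > 0 such that m_n ≤ (2n)! · c₀^n for all n ≥ 1. (By the known characterization of Hardy's condition, the latter means that the random variable X with moments m_n fails Hardy's condition: E e^{ε√X} = ∞ for every ε > 0.) -/

import Mathlib

open MeasureTheory Filter Topology Real Set

/-!
Restricting the integral to `(n, ∞)` gives `Kₙ ≥ log (1 + n) ^ n * e⁻ⁿ`, while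
`log (1 + x) ≤ log n + x / n ≤ log n * exp (x / (n log n))` gives `Kₙ ≤ 2 (log n)ⁿ` once
`log n ≥ 2`. Hence `mₙ ^ (1 / 2n) ≤ 2 n log n`, so Carleman's series dominates
`∑ 1 / (n log n)`, which diverges by Cauchy condensation. On the other hand
`(2n)! ≤ 4ⁿ (n!)²`, so a bound `mₙ ≤ (2n)! c₀ⁿ` would force `(log (1 + n) / e)² ≤ 4 c₀`
for every `n ≥ 1`, although `log (1 + n) → ∞`.
-/

noncomputable def logMoment (n : ℕ) : ℝ :=
  ∫ x in Ioi (0 : ℝ), log (1 + x) ^ n * exp (-x)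

noncomputable def moment (n : ℕ) : ℝ :=
  (n.factorial : ℝ) ^ 2 * logMoment n ^ 2

lemma integrableOn_log_one_add_pow_mul_exp_neg (n : ℕ) :
    IntegrableOn (fun x : ℝ => log (1 + x) ^ n * exp (-x)) (Ioi 0) := by
  refine (GammaIntegral_convergent (s := n + 1) (by positivity)).mono' (by fun_prop) ?_
  filter_upwards [ae_restrict_mem measurableSet_Ioi] with x (hx : 0 < x)
  have hlog : 0 ≤ log (1 + x) := log_nonneg (by linarith)
  rw [norm_of_nonneg (by positivity), add_sub_cancel_right, rpow_natCast, mul_comm (exp _)]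
  gcongr
  linarith [log_le_sub_one_of_pos (show 0 < 1 + x by linarith)]

lemma log_one_add_pow_mul_exp_neg_le_logMoment {a : ℝ} (ha : 0 ≤ a) (n : ℕ) :
    log (1 + a) ^ n * exp (-a) ≤ logMoment n := by
  have hint := integrableOn_log_one_add_pow_mul_exp_neg n
  calc log (1 + a) ^ n * exp (-a) = ∫ x in Ioi a, log (1 + a) ^ n * exp (-x) := by
        rw [integral_const_mul, integral_exp_neg_Ioi]
    _ ≤ ∫ x in Ioi a, log (1 + x) ^ n * exp (-x) := by
        refine setIntegral_mono_on ((integrableOn_exp_neg_Ioi a).const_mul _)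
          (hint.mono_set (Ioi_subset_Ioi ha)) measurableSet_Ioi fun x (hx : a < x) => ?_
        gcongr
        exact log_nonneg (by linarith)
    _ ≤ logMoment n := by
        refine setIntegral_mono_set hint ?_ (Ioi_subset_Ioi ha).eventuallyLE
        filter_upwards [ae_restrict_mem measurableSet_Ioi] with x (hx : 0 < x)
        have : 0 ≤ log (1 + x) := log_nonneg (by linarith)
        positivity

lemma logMoment_pos (n : ℕ) : 0 < logMoment n := by
  have h := log_one_add_pow_mul_exp_neg_le_logMoment zero_le_one n
  rw [one_add_one_eq_two] at h
  have := log_pos one_lt_two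
  exact lt_of_lt_of_le (by positivity) h

lemma log_one_add_le_log_add_div {t x : ℝ} (ht : 1 ≤ t) (hx : 0 ≤ x) :
    log (1 + x) ≤ log t + x / t := by
  have ht0 : 0 < t := by linarith
  calc log (1 + x) ≤ log (t * (1 + x / t)) := by
        gcongr
        rw [mul_add, mul_div_cancel₀ _ ht0.ne']
        linarith
    _ = log t + log (1 + x / t) := log_mul ht0.ne' (by positivity)
    _ ≤ log t + x / t := by
        gcongr
        linarith [log_le_sub_one_of_pos (by positivity : 0 < 1 + x / t)]

lemma add_le_mul_exp_div {L : ℝ} (hL : 0 < L) (y : ℝ) : L + y ≤ L * exp (y / L) := by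
  calc L + y = L * (y / L + 1) := by field_simp; ring
    _ ≤ L * exp (y / L) := by gcongr; exact add_one_le_exp _

lemma log_one_add_pow_le {n : ℕ} (hn : 0 < log n) {x : ℝ} (hx : 0 ≤ x) :
    log (1 + x) ^ n ≤ log n ^ n * exp (x / log n) := by
  have hn1 : (1 : ℝ) ≤ n := ((log_pos_iff n.cast_nonneg).1 hn).le
  have hn0 : (n : ℝ) ≠ 0 := by positivity
  calc log (1 + x) ^ n ≤ (log n * exp (x / n / log n)) ^ n := by
        gcongr
        · exact log_nonneg (by linarith)
        · exact (log_one_add_le_log_add_div hn1 hx).trans (add_le_mul_exp_div hn _)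
    _ = log n ^ n * exp (x / log n) := by
        rw [mul_pow, ← exp_nat_mul]
        field_simp

lemma logMoment_le {n : ℕ} (hn : 2 ≤ log n) : logMoment n ≤ 2 * log n ^ n := by
  have hL : 0 < log n := by linarith
  have hdom : ∀ x ∈ Ioi (0 : ℝ),
      log (1 + x) ^ n * exp (-x) ≤ log n ^ n * exp (-(1 / 2) * x) := fun x (hx : 0 < x) => by
    calc log (1 + x) ^ n * exp (-x) ≤ log n ^ n * exp (x / log n) * exp (-x) := by
          gcongr; exact log_one_add_pow_le hL hx.le
      _ ≤ log n ^ n * exp (x / 2) * exp (-x) := by gcongr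
      _ = log n ^ n * exp (-(1 / 2) * x) := by rw [mul_assoc, ← exp_add]; ring_nf
  calc logMoment n ≤ ∫ x in Ioi (0 : ℝ), log n ^ n * exp (-(1 / 2) * x) :=
        setIntegral_mono_on (integrableOn_log_one_add_pow_mul_exp_neg n)
          ((exp_neg_integrableOn_Ioi 0 one_half_pos).const_mul _) measurableSet_Ioi hdom
    _ = 2 * log n ^ n := by
        rw [integral_const_mul, integral_exp_mul_Ioi (by norm_num)]
        norm_num
        ring

lemma moment_pos (n : ℕ) : 0 < moment n := by
  have := logMoment_pos n
  unfold moment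
  positivity

lemma moment_le {n : ℕ} (hn : 2 ≤ log n) : moment n ≤ (2 * n * log n) ^ (2 * n) := by
  have hn1 : 1 ≤ n := by
    by_contra! h
    norm_num [Nat.lt_one_iff.1 h] at hn
  have hfac : (n.factorial : ℝ) ≤ (n : ℝ) ^ n := by exact_mod_cast n.factorial_le_pow
  have htwo : (2 : ℝ) ≤ 2 ^ n := by simpa using pow_le_pow_right₀ one_le_two hn1
  have hK := logMoment_pos n
  calc moment n = ((n.factorial : ℝ) * logMoment n) ^ 2 := by rw [moment, mul_pow]
    _ ≤ ((n : ℝ) ^ n * (2 * log n ^ n)) ^ 2 := by gcongr; exact logMoment_le hn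
    _ ≤ ((n : ℝ) ^ n * (2 ^ n * log n ^ n)) ^ 2 := by gcongr
    _ = (2 * n * log n) ^ (2 * n) := by ring

lemma factorial_two_mul_le (n : ℕ) : (2 * n).factorial ≤ 4 ^ n * n.factorial ^ 2 := by
  have h := Nat.choose_mul_factorial_mul_factorial (Nat.le_mul_of_pos_left n two_pos)
  rw [show 2 * n - n = n by omega, ← Nat.centralBinom_eq_two_mul_choose] at h
  rw [← h, sq, ← mul_assoc]
  gcongr
  exact Nat.centralBinom_le_four_pow n

lemma not_summable_inv_natCast_mul_log :
    ¬ Summable (fun n : ℕ => ((n : ℝ) * log n)⁻¹) := by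
  have hmono :
      ∀ᶠ k : ℕ in atTop, ((k + 1 : ℕ) * log (k + 1 : ℕ) : ℝ)⁻¹ ≤ ((k : ℝ) * log k)⁻¹ := by
    filter_upwards [eventually_ge_atTop 2] with k hk
    have hk' : (2 : ℝ) ≤ k := by exact_mod_cast hk
    have := log_pos (by linarith : (1 : ℝ) < k)
    gcongr <;> linarith
  rw [← summable_condensed_iff_of_eventually_nonneg
    (Eventually.of_forall fun n => by have := log_natCast_nonneg n; positivity) hmono]
  have hcond : ∀ k : ℕ,
      (2 : ℝ) ^ k * (((2 ^ k : ℕ) : ℝ) * log (2 ^ k : ℕ))⁻¹ = (k : ℝ)⁻¹ * (log 2)⁻¹ := by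
    intro k
    push_cast
    rw [log_pow, mul_inv, ← mul_assoc, mul_inv_cancel₀ (by positivity), one_mul, mul_inv]
  simp_rw [hcond, summable_mul_right_iff (inv_ne_zero (log_pos one_lt_two).ne')]
  exact Real.not_summable_natCast_inv

lemma inv_le_rpow_neg_one_div {B M : ℝ} {k : ℕ} (hk : k ≠ 0) (hB : 0 < B) (hM : 0 < M)
    (h : M ≤ B ^ k) : B⁻¹ ≤ M ^ (-1 / (k : ℝ)) := by
  calc B⁻¹ = (B ^ k) ^ (-1 / (k : ℝ)) := by
        rw [← rpow_natCast, ← rpow_mul hB.le, mul_div_cancel₀ _ (by exact_mod_cast hk),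
          rpow_neg_one]
    _ ≤ M ^ (-1 / (k : ℝ)) :=
        rpow_le_rpow_of_nonpos hM h
          (div_nonpos_of_nonpos_of_nonneg (by norm_num) k.cast_nonneg)

lemma not_summable_moment_rpow : ¬ Summable (fun n : ℕ => moment n ^ (-(1 : ℝ) / (2 * n))) := by
  intro hs
  have hlog : ∀ᶠ n : ℕ in atTop, 2 ≤ log n :=
    (tendsto_log_atTop.comp tendsto_natCast_atTop_atTop).eventually_ge_atTop 2
  have hbound : Summable (fun n : ℕ => ((n : ℝ) * log n)⁻¹ * 2⁻¹) := by
    refine hs.of_norm_bounded_eventually_nat ?_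
    filter_upwards [hlog, eventually_ne_atTop 0] with n hn hn0
    have hB : 0 < 2 * (n : ℝ) * log n := by positivity
    rw [norm_of_nonneg (by positivity), ← mul_inv, mul_comm, ← mul_assoc]
    have := inv_le_rpow_neg_one_div (by omega) hB (moment_pos n) (moment_le hn)
    simpa using this
  exact not_summable_inv_natCast_mul_log ((summable_mul_right_iff (by norm_num)).1 hbound)

lemma tendsto_sum_Icc_one_atTop_of_not_summable {a : ℕ → ℝ} (ha : ∀ n, 0 ≤ a n)
    (hs : ¬ Summable a) : Tendsto (fun N => ∑ n ∈ Finset.Icc 1 N, a n) atTop atTop := by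
  have hshift : ¬ Summable (fun i => a (1 + i)) := by
    simpa only [add_comm 1] using (summable_nat_add_iff 1).not.2 hs
  convert (not_summable_iff_tendsto_nat_atTop_of_nonneg fun i => ha (1 + i)).1 hshift
    using 2 with N
  rw [← Finset.Ico_add_one_right_eq_Icc, Finset.sum_Ico_eq_sum_range, Nat.add_sub_cancel]

lemma sq_log_one_add_mul_exp_neg_one_le {c : ℝ} (hc : 0 ≤ c)
    (h : ∀ n : ℕ, 1 ≤ n → moment n ≤ ((2 * n).factorial : ℝ) * c ^ n) {n : ℕ} (hn : 1 ≤ n) :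
    (log (1 + n) * exp (-1)) ^ 2 ≤ 4 * c := by
  have hfac : (0 : ℝ) < (n.factorial : ℝ) ^ 2 := by positivity
  have hpow : ((log (1 + n) * exp (-1)) ^ 2) ^ n ≤ (4 * c) ^ n := by
    refine le_of_mul_le_mul_left ?_ hfac
    calc (n.factorial : ℝ) ^ 2 * ((log (1 + n) * exp (-1)) ^ 2) ^ n
        = (n.factorial : ℝ) ^ 2 * (log (1 + n) ^ n * exp (-n)) ^ 2 := by
          rw [show exp (-(n : ℝ)) = exp (-1) ^ n by rw [← exp_nat_mul]; ring_nf]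
          ring
      _ ≤ moment n := by
          have hlow := log_one_add_pow_mul_exp_neg_le_logMoment n.cast_nonneg n
          have hlog : 0 ≤ log (1 + n) := log_nonneg (by linarith [(n.cast_nonneg : (0 : ℝ) ≤ n)])
          unfold moment
          gcongr
      _ ≤ ((2 * n).factorial : ℝ) * c ^ n := h n hn
      _ ≤ (4 ^ n * n.factorial ^ 2 : ℕ) * c ^ n := by
          gcongr; exact_mod_cast factorial_two_mul_le n
      _ = (n.factorial : ℝ) ^ 2 * (4 * c) ^ n := by push_cast; ring
  exact le_of_pow_le_pow_left₀ (by omega) (by positivity) hpow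

lemma not_exists_moment_le_factorial_two_mul_mul_pow :
    ¬ ∃ c : ℝ, 0 < c ∧ ∀ n : ℕ, 1 ≤ n → moment n ≤ ((2 * n).factorial : ℝ) * c ^ n := by
  rintro ⟨c, hc, h⟩
  have hgrow : Tendsto (fun n : ℕ => (log (1 + n) * exp (-1)) ^ 2) atTop atTop :=
    (tendsto_pow_atTop two_ne_zero).comp <| Tendsto.atTop_mul_const (exp_pos _) <|
      tendsto_log_atTop.comp <| tendsto_atTop_add_const_left _ _ tendsto_natCast_atTop_atTop
  obtain ⟨n, hn, hbig⟩ :=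
    ((eventually_ge_atTop 1).and (hgrow.eventually_gt_atTop (4 * c))).exists
  exact (sq_log_one_add_mul_exp_neg_one_le hc.le h hn).not_gt hbig

/-- The moments `mₙ = (n!)² Kₙ²` (with `Kₙ = ∫_0^∞ (ln(1+x))ⁿ e^{-x} dx`) satisfy
Carleman's condition `∑ₙ mₙ^{-1/(2n)} = ∞`, but there is no constant `c₀ > 0` with
`mₙ ≤ (2n)! c₀ⁿ` for all `n ≥ 1` (failure of Hardy's condition). -/
theorem carleman_holds_hardy_fails
    (K : ℕ → ℝ)
    (hK : ∀ n : ℕ, K n = ∫ x in Set.Ioi (0 : ℝ), (Real.log (1 + x)) ^ n * Real.exp (-x))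
    (m : ℕ → ℝ)
    (hm : ∀ n : ℕ, m n = (n.factorial : ℝ) ^ 2 * K n ^ 2) :
    Tendsto (fun N : ℕ => ∑ n ∈ Finset.Icc 1 N, m n ^ (-(1 : ℝ) / (2 * n)))
      atTop atTop ∧
    ¬ ∃ c₀ : ℝ, 0 < c₀ ∧ ∀ n : ℕ, 1 ≤ n →
      m n ≤ ((2 * n).factorial : ℝ) * c₀ ^ n := by
  obtain rfl : m = moment := funext fun n => by rw [hm, hK]; rfl
  exact ⟨tendsto_sum_Icc_one_atTop_of_not_summable (fun n => rpow_nonneg (moment_pos n).le _)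
    not_summable_moment_rpow, not_exists_moment_le_factorial_two_mul_mul_pow⟩
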